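/- arXiv:2506.14924 — 4 statements merged into one kernel-verified Lean document; each statement's English description precedes it below -/
import Mathlib

section
/- Let E and F be real Banach spaces, E₀ a closed subspace of E, and T : E₀ → F a bounded linear operator. If there exists a Lipschitz function f : E → F with f|_{E₀} = T, then there exists a bounded linear operator R : E → F'' (into the bidual of F) such that R(x) = k_F(T x) for all x ∈ E₀ (where k_F : F → F'' is the canonical embedding) and ‖R‖ ≤ Lip(f). -/
/-!
Abelian groups are amenable. Hahn–Banach below the sublinear functional `upperMean`, the infimum
over finite families `g` of the supremum over `h` of the average of `φ` on `h + g`, produces a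
translation-invariant mean: a difference `φ (· + b) - φ` has `upperMean ≤ 0`, since its averages
along the family `0, b, …, (n - 1) • b` telescope to `O(1 / n)`.

With invariant means `m₁` on `E` and `m₂` on `E₀`, put
`R x y = m₁ₕ m₂ₖ y (f (x + (h + k)) - f (h + k))`. The Lipschitz bound gives `|R x y| ≤ K ‖x‖ ‖y‖`, and invariance of `m₁` makes `R` additive, hence
continuous and ℝ-linear. For `x ∈ E₀`, the function `k ↦ y (f (h + k) - T k)` on `E₀` is bounded
because `f = T` there, so invariance of `m₂` reduces the inner mean to `y (T x)`.
-/

open NormedSpace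

def boundedFunctions (X : Type*) : Submodule ℝ (X → ℝ) where
  carrier := {φ | ∃ C, ∀ x, |φ x| ≤ C}
  add_mem' := by
    rintro φ ψ ⟨C, hC⟩ ⟨D, hD⟩
    exact ⟨C + D, fun x => (abs_add_le _ _).trans (add_le_add (hC x) (hD x))⟩
  zero_mem' := ⟨0, fun _ => by simp⟩
  smul_mem' := by
    rintro c φ ⟨C, hC⟩
    exact ⟨|c| * C, fun x => by
      simpa [abs_mul] using mul_le_mul_of_nonneg_left (hC x) (abs_nonneg c)⟩

section InvariantMean

variable {G : Type*} [AddCommGroup G]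

/-- Only the values on `boundedFunctions G` matter: on unbounded functions `m` is an arbitrary
linear extension. -/
structure IsInvariantMean (m : (G → ℝ) →ₗ[ℝ] ℝ) : Prop where
  abs_map_le {φ : G → ℝ} {C : ℝ} : (∀ x, |φ x| ≤ C) → |m φ| ≤ C
  map_comp_add_right {φ : G → ℝ} (b : G) :
    φ ∈ boundedFunctions G → m (fun x => φ (x + b)) = m φ
  map_const (c : ℝ) : m (fun _ => c) = c

section SupAverage

variable {ι κ : Type*} [Fintype ι] [Fintype κ] {φ ψ : G → ℝ} {C D : ℝ}

noncomputable def supAverage (g : ι → G) (φ : G → ℝ) : ℝ :=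
  ⨆ h, (∑ i, φ (h + g i)) / Fintype.card ι

lemma supAverage_smul (g : ι → G) {c : ℝ} (hc : 0 ≤ c) (φ : G → ℝ) :
    supAverage g (c • φ) = c * supAverage g φ := by
  simp only [supAverage, Real.mul_iSup_of_nonneg hc, Pi.smul_apply, smul_eq_mul,
    ← Finset.mul_sum, mul_div_assoc]

lemma supAverage_comp_equiv (g : ι → G) (e : κ ≃ ι) (φ : G → ℝ) :
    supAverage (g ∘ e) φ = supAverage g φ := by
  simp only [supAverage, Function.comp_apply, Fintype.card_congr e]
  congr 1 with h
  rw [Equiv.sum_comp e fun i => φ (h + g i)]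

variable [Nonempty ι]

lemma sum_div_card_le_of_le (g : ι → G) (hD : ∀ x, φ x ≤ D) (h : G) :
    (∑ i, φ (h + g i)) / Fintype.card ι ≤ D := by
  rw [div_le_iff₀ (by positivity)]
  simpa [mul_comm] using Finset.sum_le_card_nsmul Finset.univ _ D fun i _ => hD (h + g i)

lemma le_sum_div_card_of_le (g : ι → G) (hD : ∀ x, D ≤ φ x) (h : G) :
    D ≤ (∑ i, φ (h + g i)) / Fintype.card ι := by
  rw [le_div_iff₀ (by positivity)]
  simpa [mul_comm] using Finset.card_nsmul_le_sum Finset.univ _ D fun i _ => hD (h + g i)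

lemma supAverage_le (g : ι → G) (hD : ∀ x, φ x ≤ D) : supAverage g φ ≤ D :=
  ciSup_le (sum_div_card_le_of_le g hD)

lemma average_le_supAverage (g : ι → G) (hD : ∀ x, φ x ≤ D) (h : G) :
    (∑ i, φ (h + g i)) / Fintype.card ι ≤ supAverage g φ :=
  le_ciSup ⟨D, by rintro _ ⟨h, rfl⟩; exact sum_div_card_le_of_le g hD h⟩ h

lemma sum_le_card_mul_supAverage (g : ι → G) (hD : ∀ x, φ x ≤ D) (h : G) :
    ∑ i, φ (h + g i) ≤ Fintype.card ι * supAverage g φ := by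
  rw [← div_le_iff₀' (by positivity)]
  exact average_le_supAverage g hD h

lemma neg_le_supAverage (g : ι → G) (hC : ∀ x, |φ x| ≤ C) : -C ≤ supAverage g φ :=
  (le_sum_div_card_of_le g (fun x => neg_le_of_abs_le (hC x)) 0).trans
    (average_le_supAverage g (fun x => le_of_abs_le (hC x)) 0)

lemma supAverage_add_le [Nonempty κ] (g : ι → G) (k : κ → G) (hC : ∀ x, φ x ≤ C)
    (hD : ∀ x, ψ x ≤ D) :
    supAverage (fun p : ι × κ => g p.1 + k p.2) (φ + ψ) ≤ supAverage g φ + supAverage k ψ := by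
  refine ciSup_le fun h => ?_
  have hφ : ∑ p : ι × κ, φ (h + (g p.1 + k p.2))
      ≤ Fintype.card κ * (Fintype.card ι * supAverage g φ) := by
    rw [Fintype.sum_prod_type_right]
    refine (Finset.sum_le_sum (g := fun _ => Fintype.card ι * supAverage g φ)
      fun j _ => ?_).trans_eq (by simp)
    simpa only [add_comm (g _), add_assoc] using sum_le_card_mul_supAverage g hC (h + k j)
  have hψ : ∑ p : ι × κ, ψ (h + (g p.1 + k p.2))
      ≤ Fintype.card ι * (Fintype.card κ * supAverage k ψ) := by
    rw [Fintype.sum_prod_type]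
    refine (Finset.sum_le_sum (g := fun _ => Fintype.card κ * supAverage k ψ)
      fun i _ => ?_).trans_eq (by simp)
    simpa only [add_assoc] using sum_le_card_mul_supAverage k hD (h + g i)
  rw [div_le_iff₀ (by positivity), Fintype.card_prod]
  simp only [Pi.add_apply, Finset.sum_add_distrib]
  push_cast
  linarith

end SupAverage

lemma supAverage_sub_comp_add_le {φ : G → ℝ} {C : ℝ} (hC : ∀ x, |φ x| ≤ C) (b : G) (n : ℕ+) :
    supAverage (fun i : Fin n => (i : ℕ) • b) (fun x => φ (x + b) - φ x) ≤ 2 * C / n := by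
  refine ciSup_le fun h => ?_
  have htelescope : ∑ i : Fin n, (φ (h + (i : ℕ) • b + b) - φ (h + (i : ℕ) • b))
      = φ (h + (n : ℕ) • b) - φ (h + 0 • b) := by
    rw [Fin.sum_univ_eq_sum_range (fun i => φ (h + i • b + b) - φ (h + i • b)),
      ← Finset.sum_range_sub (fun i => φ (h + i • b))]
    simp only [succ_nsmul, add_assoc]
  rw [Fintype.card_fin, htelescope]
  gcongr
  linarith [le_of_abs_le (hC (h + (n : ℕ) • b)), neg_le_of_abs_le (hC (h + 0 • b))]

noncomputable def upperMean (φ : G → ℝ) : ℝ :=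
  ⨅ p : Σ n : ℕ+, Fin n → G, supAverage p.2 φ

section UpperMean

variable {φ ψ : G → ℝ} {C D : ℝ}

lemma upperMean_le_supAverage (hC : ∀ x, |φ x| ≤ C) {n : ℕ+} (g : Fin n → G) :
    upperMean φ ≤ supAverage g φ := by
  refine ciInf_le ⟨-C, ?_⟩ (⟨n, g⟩ : Σ n : ℕ+, Fin n → G)
  rintro _ ⟨p, rfl⟩
  exact neg_le_supAverage p.2 hC

lemma upperMean_le (hC : ∀ x, |φ x| ≤ C) (hD : ∀ x, φ x ≤ D) : upperMean φ ≤ D :=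
  (upperMean_le_supAverage hC (n := 1) fun _ => 0).trans (supAverage_le _ hD)

lemma upperMean_smul {c : ℝ} (hc : 0 ≤ c) (φ : G → ℝ) :
    upperMean (c • φ) = c * upperMean φ := by
  simp only [upperMean, Real.mul_iInf_of_nonneg hc, supAverage_smul _ hc]

lemma upperMean_add_le (hφ : φ ∈ boundedFunctions G) (hψ : ψ ∈ boundedFunctions G) :
    upperMean (φ + ψ) ≤ upperMean φ + upperMean ψ := by
  obtain ⟨C, hC⟩ := hφ
  obtain ⟨D, hD⟩ := hψ
  have hCD : ∀ x, |(φ + ψ) x| ≤ C + D := fun x =>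
    (abs_add_le _ _).trans (add_le_add (hC x) (hD x))
  refine le_ciInf_add_ciInf fun ⟨n, g⟩ ⟨m, k⟩ => ?_
  calc upperMean (φ + ψ)
      ≤ supAverage ((fun p : Fin n × Fin m => g p.1 + k p.2) ∘ finProdFinEquiv.symm) (φ + ψ) :=
        upperMean_le_supAverage (n := n * m) hCD _
    _ = supAverage (fun p : Fin n × Fin m => g p.1 + k p.2) (φ + ψ) :=
        supAverage_comp_equiv _ _ _
    _ ≤ _ := supAverage_add_le g k (fun x => le_of_abs_le (hC x)) (fun x => le_of_abs_le (hD x))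

lemma upperMean_sub_comp_add_nonpos (hφ : φ ∈ boundedFunctions G) (b : G) :
    upperMean (fun x => φ (x + b) - φ x) ≤ 0 := by
  obtain ⟨C, hC⟩ := hφ
  have hdiff : ∀ x, |φ (x + b) - φ x| ≤ C + C := fun x =>
    (abs_sub _ _).trans (add_le_add (hC _) (hC _))
  refine ge_of_tendsto (tendsto_const_div_atTop_nhds_zero_nat (2 * C))
    (Filter.eventually_atTop.2 ⟨1, fun n hn => ?_⟩)
  exact (upperMean_le_supAverage hdiff _).trans
    (supAverage_sub_comp_add_le hC b ⟨n, hn⟩)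

end UpperMean

lemma exists_le_upperMean :
    ∃ m : (G → ℝ) →ₗ[ℝ] ℝ, ∀ φ ∈ boundedFunctions G, m φ ≤ upperMean φ := by
  obtain ⟨m₀, -, hm₀⟩ := exists_extension_of_le_sublinear (⟨⊥, 0⟩ : boundedFunctions G →ₗ.[ℝ] ℝ)
    (fun φ => upperMean (φ : G → ℝ)) (fun c hc φ => upperMean_smul hc.le _)
    (fun φ ψ => upperMean_add_le φ.2 ψ.2) fun ⟨φ, hφ⟩ => by
      obtain rfl : φ = 0 := Submodule.mem_bot ℝ |>.1 hφ
      simp [upperMean, supAverage]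
  obtain ⟨m, hm⟩ := LinearMap.exists_extend m₀
  exact ⟨m, fun φ hφ => (congr($hm ⟨φ, hφ⟩)).trans_le (hm₀ ⟨φ, hφ⟩)⟩

lemma IsInvariantMean.of_le_upperMean {m : (G → ℝ) →ₗ[ℝ] ℝ}
    (hm : ∀ φ ∈ boundedFunctions G, m φ ≤ upperMean φ) : IsInvariantMean m := by
  have hle {φ : G → ℝ} {C D : ℝ} (hC : ∀ x, |φ x| ≤ C) (hD : ∀ x, φ x ≤ D) : m φ ≤ D :=
    (hm _ ⟨_, hC⟩).trans (upperMean_le hC hD)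
  have hge {φ : G → ℝ} {C D : ℝ} (hC : ∀ x, |φ x| ≤ C) (hD : ∀ x, D ≤ φ x) : D ≤ m φ := by
    have := hle (φ := -φ) (fun x => by simpa using hC x) fun x => neg_le_neg (hD x)
    rwa [map_neg, neg_le_neg_iff] at this
  have hshift {φ : G → ℝ} (hφ : φ ∈ boundedFunctions G) (b : G) :
      m (fun x => φ (x + b)) ≤ m φ := by
    rw [← sub_nonpos, ← map_sub]
    exact (hm _ (Submodule.sub_mem _ (hφ.imp fun C hC x => hC _) hφ)).trans
      (upperMean_sub_comp_add_nonpos hφ b)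
  refine ⟨fun hC => abs_le.2 ⟨hge hC fun x => neg_le_of_abs_le (hC x),
    hle hC fun x => le_of_abs_le (hC x)⟩, fun b hφ => (hshift hφ b).antisymm ?_,
    fun c => (hle (C := |c|) (fun _ => le_rfl) fun _ => le_rfl).antisymm
      (hge (C := |c|) (fun _ => le_rfl) fun _ => le_rfl)⟩
  simpa using hshift (hφ.imp fun C hC x => hC (x + b)) (-b)

theorem exists_isInvariantMean (G : Type*) [AddCommGroup G] :
    ∃ m : (G → ℝ) →ₗ[ℝ] ℝ, IsInvariantMean m :=
  exists_le_upperMean.imp fun _ => IsInvariantMean.of_le_upperMean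

end InvariantMean

lemma LipschitzWith.abs_dual_apply_sub_le {E F : Type*} [SeminormedAddCommGroup E]
    [NormedAddCommGroup F] [NormedSpace ℝ F] {K : NNReal} {f : E → F} (hf : LipschitzWith K f)
    (y : StrongDual ℝ F) (x h : E) : |y (f (x + h) - f h)| ≤ K * ‖x‖ * ‖y‖ := by
  calc |y (f (x + h) - f h)| ≤ ‖y‖ * ‖f (x + h) - f h‖ := y.le_opNorm _
    _ ≤ ‖y‖ * (K * ‖x‖) := by
        gcongr
        simpa [dist_eq_norm] using hf.dist_le_mul (x + h) h
    _ = K * ‖x‖ * ‖y‖ := by ring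

section MeanIncrement

variable {E F : Type*} [AddCommGroup E] [Module ℝ E] [NormedAddCommGroup F] [NormedSpace ℝ F]
  (E₀ : Submodule ℝ E) (m₁ : (E → ℝ) →ₗ[ℝ] ℝ) (m₂ : (E₀ → ℝ) →ₗ[ℝ] ℝ) (f : E → F)

noncomputable def meanIncrement (x : E) : StrongDual ℝ F →ₗ[ℝ] ℝ :=
  m₁ ∘ₗ LinearMap.pi fun h => m₂ ∘ₗ LinearMap.pi fun k : E₀ =>
    (inclusionInDoubleDual ℝ F (f (x + (h + k)) - f (h + k))).toLinearMap

lemma meanIncrement_apply (x : E) (y : StrongDual ℝ F) :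
    meanIncrement E₀ m₁ m₂ f x y = m₁ fun h => m₂ fun k => y (f (x + (h + k)) - f (h + k)) :=
  rfl

end MeanIncrement

section MeanIncrementBounds

variable {E F : Type*} [SeminormedAddCommGroup E] [NormedSpace ℝ E] [NormedAddCommGroup F]
  [NormedSpace ℝ F] {E₀ : Submodule ℝ E} {m₁ : (E → ℝ) →ₗ[ℝ] ℝ} {m₂ : (E₀ → ℝ) →ₗ[ℝ] ℝ}
  {K : NNReal} {f : E → F}

lemma abs_meanIncrement_apply_le (hf : LipschitzWith K f) (hm₁ : IsInvariantMean m₁)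
    (hm₂ : IsInvariantMean m₂) (x : E) (y : StrongDual ℝ F) :
    |meanIncrement E₀ m₁ m₂ f x y| ≤ K * ‖x‖ * ‖y‖ :=
  hm₁.abs_map_le fun h => hm₂.abs_map_le fun k => hf.abs_dual_apply_sub_le y x (h + k)

lemma meanIncrement_add (hf : LipschitzWith K f) (hm₁ : IsInvariantMean m₁)
    (hm₂ : IsInvariantMean m₂) (x₁ x₂ : E) :
    meanIncrement E₀ m₁ m₂ f (x₁ + x₂) =
      meanIncrement E₀ m₁ m₂ f x₁ + meanIncrement E₀ m₁ m₂ f x₂ := by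
  ext y
  have hsplit : (fun h : E => m₂ fun k => y (f (x₁ + x₂ + (h + k)) - f (h + k))) =
      (fun h => m₂ fun k => y (f (x₁ + (h + x₂ + k)) - f (h + x₂ + k))) +
        fun h => m₂ fun k => y (f (x₂ + (h + k)) - f (h + k)) := by
    ext h
    rw [Pi.add_apply, ← map_add]
    congr 1 with k
    rw [Pi.add_apply, ← map_add]
    congr 1
    simp only [add_assoc, add_left_comm x₂, add_comm x₂]
    abel
  rw [LinearMap.add_apply, meanIncrement_apply, hsplit, map_add, meanIncrement_apply,
    meanIncrement_apply]
  congr 1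
  exact hm₁.map_comp_add_right (φ := fun h => m₂ fun k => y (f (x₁ + (h + k)) - f (h + k))) x₂
    ⟨_, fun h => hm₂.abs_map_le fun k => hf.abs_dual_apply_sub_le y x₁ (h + k)⟩

lemma meanIncrement_coe (hf : LipschitzWith K f) (hm₁ : IsInvariantMean m₁)
    (hm₂ : IsInvariantMean m₂) {T : E₀ →+ F} (hT : ∀ k : E₀, f k = T k) (e : E₀) :
    meanIncrement E₀ m₁ m₂ f e = (inclusionInDoubleDual ℝ F (T e)).toLinearMap := by
  ext y
  set g : E → E₀ → ℝ := fun h k => y (f (h + k) - T k)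
  have hg : ∀ h, g h ∈ boundedFunctions E₀ := fun h =>
    ⟨_, fun k => by simpa only [g, ← hT] using hf.abs_dual_apply_sub_le y h k⟩
  have hinner (h : E) : m₂ (fun k => y (f (e + (h + k)) - f (h + k))) = y (T e) := by
    have hsplit : (fun k : E₀ => y (f (e + (h + k)) - f (h + k))) =
        (fun k => g h (k + e)) - g h + fun _ => y (T e) := by
      ext k
      have hk : (e : E) + (h + k) = h + ↑(k + e) := by rw [Submodule.coe_add]; abel
      simp only [g, hk, Pi.add_apply, Pi.sub_apply, map_add, map_sub]
      ring
    rw [hsplit, map_add, map_sub, hm₂.map_comp_add_right e (hg h), sub_self, zero_add,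
      hm₂.map_const]
  rw [meanIncrement_apply, funext hinner, hm₁.map_const]
  exact (dual_def ℝ F (T e) y).symm

end MeanIncrementBounds

lemma exists_continuousLinearMap_of_abs_apply_le {E V : Type*} [SeminormedAddCommGroup E]
    [NormedSpace ℝ E] [SeminormedAddCommGroup V] [NormedSpace ℝ V] (Φ : E →+ (V →ₗ[ℝ] ℝ)) {C : ℝ}
    (hC : 0 ≤ C) (hΦ : ∀ x y, |Φ x y| ≤ C * ‖x‖ * ‖y‖) :
    ∃ R : E →L[ℝ] StrongDual ℝ V, (∀ x y, R x y = Φ x y) ∧ ‖R‖ ≤ C := by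
  let Ψ : E →+ StrongDual ℝ V :=
    { toFun x := (Φ x).mkContinuous (C * ‖x‖) (hΦ x)
      map_zero' := by ext; simp
      map_add' x₁ x₂ := by ext; simp }
  have hΨ (x : E) : ‖Ψ x‖ ≤ C * ‖x‖ :=
    LinearMap.mkContinuous_norm_le _ (by positivity) (hΦ x)
  refine ⟨Ψ.toRealLinearMap (AddMonoidHomClass.continuous_of_bound Ψ C hΨ), fun x y => rfl, ?_⟩
  exact ContinuousLinearMap.opNorm_le_bound _ hC hΨ

theorem stmt0_general {E F : Type*} [NormedAddCommGroup E] [NormedSpace ℝ E]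
    [NormedAddCommGroup F] [NormedSpace ℝ F]
    (E₀ : Subspace ℝ E)
    (T : E₀ →L[ℝ] F) (K : NNReal) (f : E → F)
    (hf : LipschitzWith K f) (hext : ∀ x : E₀, f x = T x) :
    ∃ R : E →L[ℝ] StrongDual ℝ (StrongDual ℝ F),
      (∀ x : E₀, R x = inclusionInDoubleDual ℝ F (T x)) ∧ @norm _ (ContinuousLinearMap.hasOpNorm (E := E) (F := StrongDual ℝ (StrongDual ℝ F)) (σ₁₂ := RingHom.id ℝ)) R ≤ K := by
  obtain ⟨m₁, hm₁⟩ := exists_isInvariantMean E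
  obtain ⟨m₂, hm₂⟩ := exists_isInvariantMean E₀
  obtain ⟨R, hR, hRK⟩ := exists_continuousLinearMap_of_abs_apply_le
    (AddMonoidHom.mk' (meanIncrement E₀ m₁ m₂ f) (meanIncrement_add hf hm₁ hm₂)) K.coe_nonneg
    (abs_meanIncrement_apply_le hf hm₁ hm₂)
  refine ⟨R, fun e => ContinuousLinearMap.ext fun y => ?_, hRK⟩
  rw [hR]
  exact congr($(meanIncrement_coe hf hm₁ hm₂ (T := T) hext e) y)

/-- Lindenstrauss–Pełczyński: a Lipschitz extension of a bounded linear operator yields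
a bounded linear extension into the bidual, with norm at most the Lipschitz constant. -/
theorem stmt0 {E F : Type*} [NormedAddCommGroup E] [NormedSpace ℝ E] [CompleteSpace E]
    [NormedAddCommGroup F] [NormedSpace ℝ F] [CompleteSpace F]
    (E₀ : Subspace ℝ E) (hE₀ : IsClosed (E₀ : Set E))
    (T : E₀ →L[ℝ] F) (K : NNReal) (f : E → F)
    (hf : LipschitzWith K f) (hext : ∀ x : E₀, f x = T x) :
    ∃ R : E →L[ℝ] StrongDual ℝ (StrongDual ℝ F),
      (∀ x : E₀, R x = inclusionInDoubleDual ℝ F (T x)) ∧ @norm _ (ContinuousLinearMap.hasOpNorm (E := E) (F := StrongDual ℝ (StrongDual ℝ F)) (σ₁₂ := RingHom.id ℝ)) R ≤ K :=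
  stmt0_general E₀ T K f hf hext
end

section
/- Let E and F be real Banach spaces with F a dual space, i.e., F = G' for some Banach space G, let E₀ be a closed subspace of E, and T : E₀ → F a bounded linear operator. Then T admits a Lipschitz extension f : E → F (i.e., f|_{E₀} = T) if and only if T admits a bounded linear extension R : E → F. -/
/-!
Averaging against an invariant mean turns Lipschitz maps into a dual space into additive ones.
On an abelian group `A`, an invariant mean is an ultrafilter limit of averages over boxes
`{y + ∑ kᵢ • aᵢ | 0 ≤ kᵢ < N}`: by telescoping along `aᵢ`, such an average moves by at most
`2 ‖φ‖∞ / N` when `φ` is translated by `aᵢ`. For a `K`-Lipschitz `F : X → G'` and `ι : A →+ X`,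
the mean over `a` of `g ↦ (F (x + ι a) - F (ι a)) g` is an element `F' x` of `G'`, and `F'` is
again `K`-Lipschitz with `F' (x + ι a) = F' x + F' (ι a)`. Averaging `f` over `E₀` makes it
equivariant along `E₀` with increments `T`; averaging the result over `E` makes it additive,
hence linear, without changing it on `E₀`.
-/

open Filter Finset Topology
open scoped NNReal

section BoxAverage

variable {A : Type*} [AddCommGroup A]

noncomputable def boxAvg (N : ℕ) : List A → (A → ℝ) →ₗ[ℝ] (A → ℝ)
  | [] => LinearMap.id
  | a :: l => (N : ℝ)⁻¹ • ∑ k ∈ range N, LinearMap.funLeft ℝ ℝ (· + k • a) ∘ₗ boxAvg N l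

variable {N : ℕ} {l : List A} {φ : A → ℝ} {C : ℝ}

lemma boxAvg_cons_apply (a : A) (y : A) :
    boxAvg N (a :: l) φ y = (∑ k ∈ range N, boxAvg N l φ (y + k • a)) / N := by
  simp [boxAvg, LinearMap.sum_apply, Finset.sum_apply, div_eq_inv_mul]

lemma abs_sum_range_div_le {f : ℕ → ℝ} {D : ℝ} (hD : 0 ≤ D) (hf : ∀ k, |f k| ≤ D) :
    |(∑ k ∈ range N, f k) / N| ≤ D := by
  rcases N.eq_zero_or_pos with rfl | hN
  · simpa using hD
  rw [abs_div, Nat.abs_cast, div_le_iff₀ (by exact_mod_cast hN)]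
  calc |∑ k ∈ range N, f k| ≤ ∑ k ∈ range N, |f k| := abs_sum_le_sum_abs _ _
    _ ≤ ∑ _k ∈ range N, D := sum_le_sum fun k _ => hf k
    _ = D * N := by simp [mul_comm]

lemma abs_boxAvg_le (hφ : ∀ y, |φ y| ≤ C) (l : List A) (y : A) : |boxAvg N l φ y| ≤ C := by
  induction l generalizing y with
  | nil => exact hφ y
  | cons a l ih =>
    rw [boxAvg_cons_apply]
    exact abs_sum_range_div_le ((abs_nonneg _).trans (hφ 0)) fun k => ih _

lemma boxAvg_const (hN : 0 < N) (l : List A) (c : ℝ) : boxAvg N l (fun _ => c) = fun _ => c := by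
  induction l with
  | nil => rfl
  | cons a l ih =>
    funext y
    rw [boxAvg_cons_apply, ih]
    rw [sum_const, card_range, nsmul_eq_mul, mul_div_cancel_left₀ _ (by positivity)]

lemma boxAvg_comp_add (l : List A) (b y : A) :
    boxAvg N l (fun z => φ (z + b)) y = boxAvg N l φ (y + b) := by
  induction l generalizing y with
  | nil => rfl
  | cons a l ih => simp only [boxAvg_cons_apply, ih, add_right_comm]

lemma abs_boxAvg_comp_add_sub_le (hφ : ∀ y, |φ y| ≤ C) {b : A} (hb : b ∈ l) (y : A) :
    |boxAvg N l (fun z => φ (z + b) - φ z) y| ≤ 2 * C / N := by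
  have hC : 0 ≤ C := (abs_nonneg _).trans (hφ 0)
  induction l generalizing y with
  | nil => simp at hb
  | cons a l ih =>
    rcases List.mem_cons.1 hb with rfl | hb
    · have htel : ∑ k ∈ range N, (boxAvg N l φ (y + k • b + b) - boxAvg N l φ (y + k • b)) =
          boxAvg N l φ (y + N • b) - boxAvg N l φ y := by
        simpa [succ_nsmul, add_assoc] using
          sum_range_sub (fun k => boxAvg N l φ (y + k • b)) N
      have hsub : ∀ z, boxAvg N l (fun z => φ (z + b) - φ z) z =
          boxAvg N l φ (z + b) - boxAvg N l φ z := fun z => by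
        rw [← boxAvg_comp_add]; exact congrFun (map_sub (boxAvg N l) _ φ) z
      rw [boxAvg_cons_apply]
      simp only [hsub, htel, abs_div, Nat.abs_cast]
      gcongr
      rw [two_mul]
      exact (abs_sub _ _).trans (add_le_add (abs_boxAvg_le hφ l _) (abs_boxAvg_le hφ l _))
    · rw [boxAvg_cons_apply]
      exact abs_sum_range_div_le (by positivity) fun k => ih hb _

variable (A) in
open scoped Classical in
noncomputable def boxUltrafilter : Ultrafilter (Finset A × ℕ) := Ultrafilter.of atTop

open scoped Classical in
lemma eventually_mem_boxUltrafilter (b : A) (n : ℕ) :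
    ∀ᶠ i in (boxUltrafilter A : Filter (Finset A × ℕ)), b ∈ i.1.toList ∧ n ≤ i.2 := by
  refine Ultrafilter.of_le atTop ((eventually_ge_atTop (({b} : Finset A), n)).mono fun i hi => ?_)
  exact ⟨Finset.mem_toList.2 (Finset.singleton_subset_iff.1 hi.1), hi.2⟩

-- A junk limit point unless `φ` is bounded; every lemma below assumes a bound.
noncomputable def invariantMean (φ : A → ℝ) : ℝ :=
  limUnder (boxUltrafilter A : Filter (Finset A × ℕ)) fun i => boxAvg i.2 i.1.toList φ 0

lemma tendsto_invariantMean (hφ : ∀ y, |φ y| ≤ C) :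
    Tendsto (fun i : Finset A × ℕ => boxAvg i.2 i.1.toList φ 0) (boxUltrafilter A)
      (𝓝 (invariantMean φ)) := by
  refine tendsto_nhds_limUnder ?_
  have hmem : Set.Icc (-C) C ∈ (boxUltrafilter A).map fun i => boxAvg i.2 i.1.toList φ 0 :=
    Ultrafilter.mem_map.2 <|
      Eventually.of_forall fun i => abs_le.1 (abs_boxAvg_le hφ i.1.toList 0)
  obtain ⟨c, -, hc⟩ := isCompact_Icc.ultrafilter_le_nhds' _ hmem
  exact ⟨c, hc⟩

lemma invariantMean_eq_of_tendsto (hφ : ∀ y, |φ y| ≤ C) {c : ℝ}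
    (h : Tendsto (fun i : Finset A × ℕ => boxAvg i.2 i.1.toList φ 0) (boxUltrafilter A) (𝓝 c)) :
    invariantMean φ = c :=
  tendsto_nhds_unique (tendsto_invariantMean hφ) h

variable {ψ : A → ℝ} {D : ℝ}

lemma invariantMean_add (hφ : ∀ y, |φ y| ≤ C) (hψ : ∀ y, |ψ y| ≤ D) :
    invariantMean (φ + ψ) = invariantMean φ + invariantMean ψ :=
  invariantMean_eq_of_tendsto (φ := φ + ψ)
    (fun y => (abs_add_le _ _).trans (add_le_add (hφ y) (hψ y)))
    (by simpa only [map_add, Pi.add_apply] using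
      (tendsto_invariantMean hφ).add (tendsto_invariantMean hψ))

lemma invariantMean_sub (hφ : ∀ y, |φ y| ≤ C) (hψ : ∀ y, |ψ y| ≤ D) :
    invariantMean (φ - ψ) = invariantMean φ - invariantMean ψ :=
  invariantMean_eq_of_tendsto (φ := φ - ψ)
    (fun y => (abs_sub _ _).trans (add_le_add (hφ y) (hψ y)))
    (by simpa only [map_sub, Pi.sub_apply] using
      (tendsto_invariantMean hφ).sub (tendsto_invariantMean hψ))

lemma invariantMean_smul (hφ : ∀ y, |φ y| ≤ C) (c : ℝ) :
    invariantMean (c • φ) = c * invariantMean φ :=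
  invariantMean_eq_of_tendsto (C := |c| * C)
    (fun y => by rw [Pi.smul_apply, smul_eq_mul, abs_mul]; gcongr; exact hφ y)
    (by simpa only [map_smul, Pi.smul_apply, smul_eq_mul] using
      (tendsto_invariantMean hφ).const_mul c)

lemma abs_invariantMean_le (hφ : ∀ y, |φ y| ≤ C) : |invariantMean φ| ≤ C :=
  (isClosed_le continuous_abs continuous_const).mem_of_tendsto (tendsto_invariantMean hφ)
    (Eventually.of_forall fun _ => abs_boxAvg_le hφ _ _)

lemma invariantMean_const (c : ℝ) : invariantMean (fun _ : A => c) = c := by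
  refine invariantMean_eq_of_tendsto (fun _ => le_rfl) (tendsto_const_nhds.congr' ?_)
  filter_upwards [eventually_mem_boxUltrafilter (0 : A) 1] with i hi
  rw [boxAvg_const hi.2]

lemma invariantMean_comp_add (hφ : ∀ y, |φ y| ≤ C) (b : A) :
    invariantMean (fun y => φ (y + b)) = invariantMean φ := by
  have hbound (y : A) : |φ (y + b) - φ y| ≤ C + C :=
    (abs_sub _ _).trans (add_le_add (hφ _) (hφ y))
  have hzero : invariantMean (fun y => φ (y + b) - φ y) = 0 := by
    have hN : Tendsto (fun i : Finset A × ℕ => i.2) (boxUltrafilter A) atTop :=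
      tendsto_atTop.2 fun n => (eventually_mem_boxUltrafilter 0 n).mono fun _ hi => hi.2
    refine invariantMean_eq_of_tendsto hbound
      (squeeze_zero_norm' (a := fun i => 2 * C / i.2) ?_ ?_)
    · filter_upwards [eventually_mem_boxUltrafilter b 0] with i hi
      exact abs_boxAvg_comp_add_sub_le hφ hi.1 0
    · exact (tendsto_const_div_atTop_nhds_zero_nat (2 * C)).comp hN
  rw [← sub_eq_zero, ← invariantMean_sub (fun y => hφ (y + b)) hφ]
  exact hzero

end BoxAverage

section AverageDual

variable {X G A : Type*} [SeminormedAddCommGroup X] [SeminormedAddCommGroup G] [NormedSpace ℝ G]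
  [AddCommGroup A] {K : ℝ≥0} {F : X → StrongDual ℝ G}

lemma LipschitzWith.abs_apply_sub_apply_le (hF : LipschitzWith K F) (x x' : X) (g : G) :
    |F x g - F x' g| ≤ K * ‖x - x'‖ * ‖g‖ := by
  rw [← sub_apply, ← Real.norm_eq_abs]
  calc ‖(F x - F x') g‖ ≤ ‖F x - F x'‖ * ‖g‖ := (F x - F x').le_opNorm g
    _ ≤ K * ‖x - x'‖ * ‖g‖ := by
      gcongr
      simpa only [dist_eq_norm] using hF.dist_le_mul x x'

lemma LipschitzWith.abs_apply_add_sub_apply_le (hF : LipschitzWith K F) (x y : X) (g : G) :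
    |F (x + y) g - F y g| ≤ K * ‖x‖ * ‖g‖ := by
  simpa using hF.abs_apply_sub_apply_le (x + y) y g

noncomputable def averageDual (hF : LipschitzWith K F) (ι : A →+ X) (x : X) : StrongDual ℝ G :=
  LinearMap.mkContinuous
    { toFun g := invariantMean fun a => F (x + ι a) g - F (ι a) g
      map_add' g g' := by
        rw [← invariantMean_add (fun a => hF.abs_apply_add_sub_apply_le x (ι a) g)
          (fun a => hF.abs_apply_add_sub_apply_le x (ι a) g')]
        congr 1
        funext a
        simp only [map_add, Pi.add_apply]
        ring
      map_smul' c g := by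
        rw [RingHom.id_apply, smul_eq_mul,
          ← invariantMean_smul (fun a => hF.abs_apply_add_sub_apply_le x (ι a) g)]
        congr 1
        funext a
        simp only [map_smul, Pi.smul_apply, smul_eq_mul]
        ring }
    (K * ‖x‖) fun g => abs_invariantMean_le (fun a => hF.abs_apply_add_sub_apply_le x (ι a) g)

variable (hF : LipschitzWith K F) (ι : A →+ X)

lemma averageDual_apply (x : X) (g : G) :
    averageDual hF ι x g = invariantMean fun a => F (x + ι a) g - F (ι a) g := rfl

lemma lipschitzWith_averageDual : LipschitzWith K (averageDual hF ι) := by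
  refine LipschitzWith.of_dist_le_mul fun x x' => ?_
  rw [dist_eq_norm, dist_eq_norm]
  refine ContinuousLinearMap.opNorm_le_bound _ (by positivity) fun g => ?_
  rw [sub_apply, averageDual_apply, averageDual_apply, Real.norm_eq_abs,
    ← invariantMean_sub (fun a => hF.abs_apply_add_sub_apply_le x (ι a) g)
      (fun a => hF.abs_apply_add_sub_apply_le x' (ι a) g)]
  refine abs_invariantMean_le fun a => ?_
  simpa using hF.abs_apply_sub_apply_le (x + ι a) (x' + ι a) g

lemma averageDual_add (x : X) (a : A) :
    averageDual hF ι (x + ι a) = averageDual hF ι x + averageDual hF ι (ι a) := by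
  ext g
  rw [add_apply, averageDual_apply, averageDual_apply, averageDual_apply,
    ← invariantMean_comp_add (fun b => hF.abs_apply_add_sub_apply_le x (ι b) g) a,
    ← invariantMean_add (fun b => hF.abs_apply_add_sub_apply_le x (ι (b + a)) g)
      (fun b => hF.abs_apply_add_sub_apply_le (ι a) (ι b) g)]
  congr 1
  funext b
  simp only [Pi.add_apply, map_add, add_assoc, add_comm (ι b) (ι a)]
  ring

lemma averageDual_eq_of_forall {a : A} {c : StrongDual ℝ G}
    (h : ∀ b, F (ι a + ι b) - F (ι b) = c) : averageDual hF ι (ι a) = c := by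
  ext g
  simp only [averageDual_apply, ← sub_apply, h, invariantMean_const]

end AverageDual

theorem LipschitzWith.exists_continuousLinearMap_extension {E G : Type*} [NormedAddCommGroup E]
    [NormedSpace ℝ E] [SeminormedAddCommGroup G] [NormedSpace ℝ G] {E₀ : Submodule ℝ E}
    {T : E₀ →L[ℝ] StrongDual ℝ G} {K : ℝ≥0} {f : E → StrongDual ℝ G} (hf : LipschitzWith K f)
    (hfT : ∀ x : E₀, f x = T x) : ∃ R : E →L[ℝ] StrongDual ℝ G, ∀ x : E₀, R x = T x := by
  set f₀ := averageDual hf E₀.subtype.toAddMonoidHom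
  have hf₀T (x : E₀) : f₀ x = T x := averageDual_eq_of_forall hf _ fun y => by
    simp only [LinearMap.toAddMonoidHom_coe, Submodule.subtype_apply]
    rw [← Submodule.coe_add, hfT, hfT, map_add, add_sub_cancel_right]
  have hf₀_add (y : E) (x : E₀) : f₀ (y + x) = f₀ y + T x :=
    (averageDual_add hf _ y x).trans (congrArg _ (hf₀T x))
  have hf₀ : LipschitzWith K f₀ := lipschitzWith_averageDual hf _
  set R := AddMonoidHom.mk' (averageDual hf₀ (AddMonoidHom.id E)) (averageDual_add hf₀ _)
  have hR : LipschitzWith K R := lipschitzWith_averageDual hf₀ _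
  refine ⟨R.toRealLinearMap hR.continuous, fun x => ?_⟩
  rw [AddMonoidHom.coe_toRealLinearMap, AddMonoidHom.mk'_apply]
  exact averageDual_eq_of_forall hf₀ (a := (x : E)) _ fun y => by
    simp only [AddMonoidHom.id_apply]
    rw [add_comm, hf₀_add, add_sub_cancel_left]

theorem stmt1_general {E G : Type*} [NormedAddCommGroup E] [NormedSpace ℝ E]
    [NormedAddCommGroup G] [NormedSpace ℝ G]
    (E₀ : Subspace ℝ E)
    (T : E₀ →L[ℝ] StrongDual ℝ G) :
    (∃ (K : NNReal) (f : E → StrongDual ℝ G), LipschitzWith K f ∧ ∀ x : E₀, f x = T x) ↔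
      (∃ R : E →L[ℝ] StrongDual ℝ G, ∀ x : E₀, R x = T x) := by
  constructor
  · rintro ⟨K, f, hf, hfT⟩
    exact hf.exists_continuousLinearMap_extension hfT
  · rintro ⟨R, hR⟩
    exact ⟨‖R‖₊, R, R.lipschitz, hR⟩

/-- For operators into a dual space, a Lipschitz extension exists iff a bounded linear
extension exists. -/
theorem stmt1 {E G : Type*} [NormedAddCommGroup E] [NormedSpace ℝ E] [CompleteSpace E]
    [NormedAddCommGroup G] [NormedSpace ℝ G] [CompleteSpace G]
    (E₀ : Subspace ℝ E) (hE₀ : IsClosed (E₀ : Set E))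
    (T : E₀ →L[ℝ] StrongDual ℝ G) :
    (∃ (K : NNReal) (f : E → StrongDual ℝ G), LipschitzWith K f ∧ ∀ x : E₀, f x = T x) ↔
      (∃ R : E →L[ℝ] StrongDual ℝ G, ∀ x : E₀, R x = T x) :=
  stmt1_general E₀ T
end

section
/- The identity map of c₀ does not extend to a bounded linear operator from ℓ∞ to c₀; that is, there is no bounded linear operator P : ℓ∞ → c₀ with P(x) = x for all x ∈ c₀. -/
open BoundedContinuousFunction ZeroAtInfty

/-! Whitley's proof. Let `f` be a bounded functional on `ℓ∞` vanishing on indicators of finite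
sets. For disjoint sets `Bᵢ`, testing `f` on `∑ sign (f 𝟙[Bᵢ]) • 𝟙[Bᵢ]`, of norm `≤ 1`, gives
`∑ |f 𝟙[Bᵢ]| ≤ ‖f‖`. Finitely many members of an almost disjoint family become disjoint after
removing finite sets, which `f` does not see; so only finitely many members `A` have
`|f 𝟙[A]| > ε`, and only countably many have `f 𝟙[A] ≠ 0`. The codes of the prefixes of the
branches of the binary tree form an uncountable almost disjoint family of infinite subsets of `ℕ`.
Applying this to the coordinates of `x ↦ x - P x` yields an infinite `A` with
`𝟙[A] = P 𝟙[A] ∈ c₀`, which is absurd. -/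

def PairwiseAlmostDisjoint {ι α : Type*} (A : ι → Set α) : Prop :=
  Pairwise fun i j => (A i ∩ A j).Finite

namespace ZeroAtInftyContinuousMap

variable {α 𝕜 β : Type*} [TopologicalSpace α] [NormedField 𝕜] [SeminormedAddCommGroup β]
  [NormedSpace 𝕜 β]

noncomputable def toBCFₗᵢ : C₀(α, β) →ₗᵢ[𝕜] α →ᵇ β where
  toFun := toBCF
  map_add' _ _ := rfl
  map_smul' _ _ := rfl
  norm_map' _ := norm_toBCF_eq_norm

@[simp] lemma toBCFₗᵢ_apply (f : C₀(α, β)) : toBCFₗᵢ (𝕜 := 𝕜) f = f.toBCF := rfl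

end ZeroAtInftyContinuousMap

namespace BoundedContinuousFunction

variable {α ι : Type*} [TopologicalSpace α] [DiscreteTopology α]

notation "𝟙[" s "]" => BoundedContinuousFunction.indicator s (isClopen_discrete s)

lemma indicator_sdiff_of_subset {s t : Set α} (h : s ⊆ t) :
    𝟙[t \ s] = 𝟙[t] - 𝟙[s] := by
  ext a
  simp [Set.indicator_sdiff h]

lemma indicator_mem_range_toBCF_iff {s : Set α} :
    𝟙[s] ∈ Set.range ZeroAtInftyContinuousMap.toBCF ↔ s.Finite := by
  constructor
  · rintro ⟨g, hg⟩
    have hg0 := zero_at_infty g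
    rw [Filter.cocompact_eq_cofinite] at hg0
    refine (Filter.eventually_cofinite.1 (hg0.eventually (Metric.ball_mem_nhds 0 one_pos))).subset
      fun a ha => ?_
    have : g a = 1 := by simpa [ha] using congr($hg a)
    simp [this]
  · intro hs
    refine ⟨⟨(𝟙[s]).toContinuousMap, ?_⟩, rfl⟩
    rw [Filter.cocompact_eq_cofinite]
    refine tendsto_const_nhds.congr' ?_
    filter_upwards [hs.eventually_cofinite_notMem] with a ha
    simp [ha]

lemma norm_sum_smul_indicator_le_one {F : Finset ι} {B : ι → Set α}
    (hB : (F : Set ι).PairwiseDisjoint B) {c : ι → ℝ} (hc : ∀ i, |c i| ≤ 1) :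
    ‖∑ i ∈ F, c i • 𝟙[B i]‖ ≤ 1 := by
  refine (norm_le zero_le_one).2 fun a => ?_
  simp only [coe_sum, coe_smul, Finset.sum_apply, indicator_apply, smul_eq_mul]
  by_cases ha : ∃ j ∈ F, a ∈ B j
  · obtain ⟨j, hj, haj⟩ := ha
    rw [Finset.sum_eq_single_of_mem j hj fun i hi hij => ?_]
    · simpa [haj] using hc j
    · have : a ∉ B i := fun hai => Set.disjoint_left.1 (hB hi hj hij) hai haj
      simp [this]
  · push Not at ha
    rw [Finset.sum_eq_zero fun i hi => by simp [ha i hi]]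
    simp

lemma sum_abs_apply_indicator_le_opNorm (f : (α →ᵇ ℝ) →L[ℝ] ℝ) {F : Finset ι} {B : ι → Set α}
    (hB : (F : Set ι).PairwiseDisjoint B) :
    ∑ i ∈ F, |f 𝟙[B i]| ≤ ‖f‖ := by
  have hsign (i : ι) : |(SignType.sign (f 𝟙[B i]) : ℝ)| ≤ 1 := by
    rcases lt_trichotomy (f 𝟙[B i]) 0 with h | h | h <;> simp [h]
  calc ∑ i ∈ F, |f 𝟙[B i]|
      = f (∑ i ∈ F, (SignType.sign (f 𝟙[B i]) : ℝ) • 𝟙[B i]) := by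
        simp [map_sum, sign_mul_self]
    _ ≤ ‖f‖ * ‖∑ i ∈ F, (SignType.sign (f 𝟙[B i]) : ℝ) • 𝟙[B i]‖ :=
        (le_abs_self _).trans (f.le_opNorm _)
    _ ≤ ‖f‖ := mul_le_of_le_one_right (norm_nonneg f) (norm_sum_smul_indicator_le_one hB hsign)

variable {A : ι → Set α}

lemma sum_abs_apply_indicator_le_opNorm_of_pairwiseAlmostDisjoint (f : (α →ᵇ ℝ) →L[ℝ] ℝ)
    (hf : ∀ s : Set α, s.Finite → f 𝟙[s] = 0) (hA : PairwiseAlmostDisjoint A)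
    (F : Finset ι) : ∑ i ∈ F, |f 𝟙[A i]| ≤ ‖f‖ := by
  classical
  set D : ι → Set α := fun i => ⋃ j ∈ F.erase i, A i ∩ A j
  have hD_sub (i : ι) : D i ⊆ A i := Set.iUnion₂_subset fun _ _ => Set.inter_subset_left
  have hD_finite (i : ι) : (D i).Finite :=
    (F.erase i).finite_toSet.biUnion fun _ hj => hA (Finset.ne_of_mem_erase hj).symm
  have hf_sdiff (i : ι) : f 𝟙[A i \ D i] = f 𝟙[A i] := by
    rw [indicator_sdiff_of_subset (hD_sub i), map_sub, hf _ (hD_finite i), sub_zero]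
  have hdisj : (F : Set ι).PairwiseDisjoint fun i => A i \ D i := by
    intro i _ j hj hij
    rw [Function.onFun, Set.disjoint_left]
    rintro a ⟨hai, haDi⟩ ⟨haj, -⟩
    exact haDi (Set.mem_iUnion₂.2 ⟨j, Finset.mem_erase.2 ⟨hij.symm, hj⟩, hai, haj⟩)
  simpa only [hf_sdiff] using sum_abs_apply_indicator_le_opNorm f hdisj

lemma finite_setOf_lt_abs_apply_indicator (f : (α →ᵇ ℝ) →L[ℝ] ℝ)
    (hf : ∀ s : Set α, s.Finite → f 𝟙[s] = 0) (hA : PairwiseAlmostDisjoint A)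
    {ε : ℝ} (hε : 0 < ε) : {i | ε < |f 𝟙[A i]|}.Finite := by
  by_contra hinf
  obtain ⟨F, hF_sub, hF_card⟩ := Set.Infinite.exists_subset_card_eq hinf (⌊‖f‖ / ε⌋₊ + 1)
  have hle : F.card * ε ≤ ‖f‖ := by
    calc F.card * ε ≤ ∑ i ∈ F, |f 𝟙[A i]| := by
          simpa using Finset.card_nsmul_le_sum F _ ε fun i hi => (hF_sub hi).le
      _ ≤ ‖f‖ := sum_abs_apply_indicator_le_opNorm_of_pairwiseAlmostDisjoint f hf hA F
  have hlt : ‖f‖ / ε < F.card := by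
    simpa [hF_card] using Nat.lt_floor_add_one (‖f‖ / ε)
  rw [div_lt_iff₀ hε] at hlt
  linarith

lemma countable_setOf_apply_indicator_ne_zero (f : (α →ᵇ ℝ) →L[ℝ] ℝ)
    (hf : ∀ s : Set α, s.Finite → f 𝟙[s] = 0) (hA : PairwiseAlmostDisjoint A) :
    {i | f 𝟙[A i] ≠ 0}.Countable := by
  have : {i | f 𝟙[A i] ≠ 0} = ⋃ k : ℕ, {i | 1 / (k + 1 : ℝ) < |f 𝟙[A i]|} := by
    ext i
    simp only [Set.mem_ofPred_eq, Set.mem_iUnion]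
    refine ⟨fun h => exists_nat_one_div_lt (abs_pos.2 h), fun ⟨k, hk⟩ => ?_⟩
    exact abs_pos.1 (lt_trans (by positivity) hk)
  rw [this]
  exact Set.countable_iUnion fun k =>
    (finite_setOf_lt_abs_apply_indicator f hf hA (by positivity)).countable

lemma exists_forall_apply_indicator_eq_zero {κ : Type*} [Countable κ] [Uncountable ι]
    (f : κ → (α →ᵇ ℝ) →L[ℝ] ℝ) (hf : ∀ k, ∀ s : Set α, s.Finite → f k 𝟙[s] = 0)
    (hA : PairwiseAlmostDisjoint A) : ∃ i, ∀ k, f k 𝟙[A i] = 0 := by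
  have hcount : {i | ∃ k, f k 𝟙[A i] ≠ 0}.Countable := by
    simpa only [Set.ofPred_exists] using
      Set.countable_iUnion fun k => countable_setOf_apply_indicator_ne_zero (f k) (hf k) hA
  by_contra! h
  exact Set.not_countable_univ (Set.eq_univ_of_forall h ▸ hcount)

end BoundedContinuousFunction

/-- Distinct branches `x ≠ y` share only the prefixes shorter than their first disagreement. -/
def prefixCodes (x : ℕ → Bool) : Set ℕ :=
  Set.range fun n => Encodable.encode ((List.range n).map x)

lemma infinite_prefixCodes (x : ℕ → Bool) : (prefixCodes x).Infinite :=
  Set.infinite_range_of_injective fun n m h => by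
    simpa using congrArg List.length (Encodable.encode_injective h)

lemma pairwiseAlmostDisjoint_prefixCodes : PairwiseAlmostDisjoint prefixCodes := by
  intro x y hxy
  obtain ⟨k, hk⟩ := Function.ne_iff.1 hxy
  refine ((Set.finite_Iic k).image fun n => Encodable.encode ((List.range n).map x)).subset ?_
  rintro _ ⟨⟨n, rfl⟩, m, hm⟩
  have hlist := Encodable.encode_injective hm
  obtain rfl : m = n := by simpa using congrArg List.length hlist
  refine ⟨m, Set.mem_Iic.2 (not_lt.1 fun hkm => hk ?_), rfl⟩
  exact (List.map_inj_left.1 hlist k (List.mem_range.2 hkm)).symm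

instance : Uncountable (ℕ → Bool) :=
  Cardinal.aleph0_lt_mk_iff.1 (by simpa using Cardinal.cantor Cardinal.aleph0)

/-- Phillips–Sobczyk: c₀ is not complemented in ℓ∞; there is no bounded linear
projection from ℓ∞ onto c₀ restricting to the identity on c₀. -/
theorem stmt2 :
    ¬ ∃ P : (ℕ →ᵇ ℝ) →L[ℝ] C₀(ℕ, ℝ), ∀ x : C₀(ℕ, ℝ), P x.toBCF = x := by
  rintro ⟨P, hP⟩
  set Q : (ℕ →ᵇ ℝ) →L[ℝ] ℕ →ᵇ ℝ :=
    .id ℝ _ - (ZeroAtInftyContinuousMap.toBCFₗᵢ (𝕜 := ℝ)).toContinuousLinearMap ∘L P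
  have hQ (s : Set ℕ) (hs : s.Finite) : Q 𝟙[s] = 0 := by
    obtain ⟨g, hg⟩ := indicator_mem_range_toBCF_iff.2 hs
    simp [Q, ← hg, hP]
  obtain ⟨x, hx⟩ := exists_forall_apply_indicator_eq_zero (fun n => evalCLM ℝ n ∘L Q)
    (fun n s hs => by simp [hQ s hs]) pairwiseAlmostDisjoint_prefixCodes
  have hPx : 𝟙[prefixCodes x] = (P 𝟙[prefixCodes x]).toBCF := by
    ext n
    simpa [Q, sub_eq_zero] using hx n
  exact infinite_prefixCodes x (indicator_mem_range_toBCF_iff.1 ⟨_, hPx.symm⟩)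
end

section
/- Let E, F be real Banach spaces, E₀ ⊆ E a closed subspace, and T : E₀ → F'' a bounded linear operator. Suppose for every finite-dimensional subspace G of E there exists R_G ∈ L(G, F'') with ‖R_G‖ ≤ C and R_G|_{G ∩ E₀} = T|_{G ∩ E₀}. Then there exists R ∈ L(E, F'') with ‖R‖ ≤ C and R|_{E₀} = T. -/
/-!
Index by the finite sets `S ⊆ E`, through the finite-dimensional subspaces `span S`, and extend
each `R_{span S}` by zero off its domain. Along an ultrafilter finer than `atTop` every `x` eventually
lies in `span S`, so by Banach–Alaoglu these values at `x` converge weak-star in `F''` to some `R x`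
with `‖R x‖ ≤ C‖x‖`. Linearity and agreement with `T` hold eventually, hence in the Hausdorff
weak-star limit.
-/

namespace NormedSpace

def Dual (𝕜 : Type*) [NontriviallyNormedField 𝕜] (E : Type*) [NormedAddCommGroup E] [NormedSpace 𝕜 E] : Type _ := E →L[𝕜] 𝕜

noncomputable instance (𝕜 : Type*) [NontriviallyNormedField 𝕜] (E : Type*) [NormedAddCommGroup E] [NormedSpace 𝕜 E] : NormedAddCommGroup (Dual 𝕜 E) :=
  ContinuousLinearMap.toNormedAddCommGroup (𝕜 := 𝕜) (𝕜₂ := 𝕜) (E := E) (F := 𝕜) (σ₁₂ := RingHom.id 𝕜)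

noncomputable instance (𝕜 : Type*) [NontriviallyNormedField 𝕜] (E : Type*) [NormedAddCommGroup E] [NormedSpace 𝕜 E] : NormedSpace 𝕜 (Dual 𝕜 E) :=
  ContinuousLinearMap.toNormedSpace (E := E) (F := 𝕜) (σ₁₂ := RingHom.id 𝕜)

end NormedSpace

open NormedSpace
open Filter Topology

section WeakStarUltralimit

variable {𝕜 X : Type*} [NontriviallyNormedField 𝕜] [NormedAddCommGroup X] [NormedSpace 𝕜 X]
  [ProperSpace 𝕜] {ι : Type*}

theorem WeakDual.exists_tendsto_of_eventually_norm_le (U : Ultrafilter ι)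
    (φ : ι → WeakDual 𝕜 X) {r : ℝ} (hφ : ∀ᶠ i in U, ‖toStrongDual (φ i)‖ ≤ r) :
    ∃ ψ : WeakDual 𝕜 X, ‖toStrongDual ψ‖ ≤ r ∧ Tendsto φ U (𝓝 ψ) := by
  obtain ⟨ψ, hψ, hlim⟩ := (WeakDual.isCompact_closedBall (0 : StrongDual 𝕜 X) r).ultrafilter_le_nhds
    (U.map φ) (le_principal_iff.2 <| hφ.mono fun i hi => by simpa using hi)
  exact ⟨ψ, by simpa using hψ, hlim⟩

variable {E : Type*} [NormedAddCommGroup E] [NormedSpace 𝕜 E]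

theorem WeakDual.exists_continuousLinearMap_tendsto (U : Ultrafilter ι)
    (h : ι → E → WeakDual 𝕜 X) {C : ℝ} (hC : 0 ≤ C)
    (hadd : ∀ x y, ∀ᶠ i in U, h i (x + y) = h i x + h i y)
    (hsmul : ∀ (c : 𝕜) x, ∀ᶠ i in U, h i (c • x) = c • h i x)
    (hbd : ∀ x, ∀ᶠ i in U, ‖toStrongDual (h i x)‖ ≤ C * ‖x‖) :
    ∃ R : E →L[𝕜] StrongDual 𝕜 X, ‖R‖ ≤ C ∧
      ∀ x, Tendsto (fun i => h i x) U (𝓝 (StrongDual.toWeakDual (R x))) := by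
  choose r hr hlim using fun x => exists_tendsto_of_eventually_norm_le U (h · x) (hbd x)
  let L : E →ₗ[𝕜] StrongDual 𝕜 X :=
    { toFun := fun x => toStrongDual (r x)
      map_add' := fun x y => by
        rw [← map_add]
        exact congrArg _ <| tendsto_nhds_unique (hlim (x + y))
          (((hlim x).add (hlim y)).congr' <| (hadd x y).mono fun i hi => hi.symm)
      map_smul' := fun c x => by
        rw [RingHom.id_apply, ← map_smul]
        exact congrArg _ <| tendsto_nhds_unique (hlim (c • x))
          (((hlim x).const_smul c).congr' <| (hsmul c x).mono fun i hi => hi.symm) }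
  exact ⟨L.mkContinuous C hr, L.mkContinuous_norm_le hC hr, fun x => hlim x⟩

theorem WeakDual.exists_continuousLinearMap_eq_of_eventually (U : Ultrafilter ι)
    (G : ι → Submodule 𝕜 E) (hG : ∀ x, ∀ᶠ i in U, x ∈ G i)
    (RG : ∀ i, G i →L[𝕜] StrongDual 𝕜 X) {C : ℝ} (hC : 0 ≤ C) (hRG : ∀ i, ‖RG i‖ ≤ C) :
    ∃ R : E →L[𝕜] StrongDual 𝕜 X, ‖R‖ ≤ C ∧
      ∀ x y, (∀ᶠ i in U, ∀ hx : x ∈ G i, RG i ⟨x, hx⟩ = y) → R x = y := by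
  classical
  let h : ι → E → WeakDual 𝕜 X := fun i x =>
    StrongDual.toWeakDual (if hx : x ∈ G i then RG i ⟨x, hx⟩ else 0)
  have h_of_mem : ∀ i x (hx : x ∈ G i), h i x = StrongDual.toWeakDual (RG i ⟨x, hx⟩) :=
    fun i x hx => by simp only [h, dif_pos hx]
  obtain ⟨R, hR, hlim⟩ := exists_continuousLinearMap_tendsto U h hC
    (fun x y => by
      filter_upwards [hG x, hG y] with i hx hy
      rw [h_of_mem i _ (add_mem hx hy), h_of_mem i x hx, h_of_mem i y hy, ← map_add, ← map_add]
      rfl)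
    (fun c x => by
      filter_upwards [hG x] with i hx
      rw [h_of_mem i _ (Submodule.smul_mem _ c hx), h_of_mem i x hx, ← map_smul, ← map_smul]
      rfl)
    (fun x => by
      filter_upwards [hG x] with i hx
      rw [h_of_mem i x hx]
      exact ((RG i).le_opNorm _).trans (mul_le_mul_of_nonneg_right (hRG i) (norm_nonneg x)))
  refine ⟨R, hR, fun x y hxy => StrongDual.toWeakDual.injective <|
    tendsto_nhds_unique (hlim x) (tendsto_const_nhds.congr' ?_)⟩
  filter_upwards [hG x, hxy] with i hx hxy
  rw [h_of_mem i x hx, hxy hx]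

end WeakStarUltralimit

theorem stmt13_general {E F : Type*} [NormedAddCommGroup E] [NormedSpace ℝ E]
    [NormedAddCommGroup F] [NormedSpace ℝ F]
    (E₀ : Subspace ℝ E)
    (T : E₀ →L[ℝ] Dual ℝ (Dual ℝ F)) (C : ℝ)
    (hloc : ∀ G : Subspace ℝ E, FiniteDimensional ℝ G →
      ∃ RG : G →L[ℝ] Dual ℝ (Dual ℝ F), ‖RG‖ ≤ C ∧
        ∀ (x : E) (hxG : x ∈ G) (hx0 : x ∈ E₀), RG ⟨x, hxG⟩ = T ⟨x, hx0⟩) :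
    ∃ R : E →L[ℝ] Dual ℝ (Dual ℝ F), ‖R‖ ≤ C ∧ ∀ x : E₀, R x = T x := by
  obtain ⟨R₀, hR₀, -⟩ := hloc ⊥ inferInstance
  choose RG hRG hRGT using fun S : Finset E => hloc (Submodule.span ℝ S) inferInstance
  let U : Ultrafilter (Finset E) := .of atTop
  have hmem : ∀ x : E, ∀ᶠ S : Finset E in (U : Filter (Finset E)),
      x ∈ Submodule.span ℝ (S : Set E) := fun x =>
    Ultrafilter.of_le _ <| (eventually_ge_atTop ({x} : Finset E)).mono fun S hS =>
      Submodule.subset_span (hS (Finset.mem_singleton_self x))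
  obtain ⟨R, hR, hRT⟩ := WeakDual.exists_continuousLinearMap_eq_of_eventually U _ hmem RG
    ((norm_nonneg R₀).trans hR₀) hRG
  exact ⟨R, hR, fun x => hRT x (T x) (.of_forall fun S hx => hRGT S x hx x.2)⟩

/-- Local-to-global extension: uniformly bounded extensions on all finite-dimensional
subspaces glue (via a weak-star ultrafilter limit) to a global bounded extension. -/
theorem stmt13 {E F : Type*} [NormedAddCommGroup E] [NormedSpace ℝ E] [CompleteSpace E]
    [NormedAddCommGroup F] [NormedSpace ℝ F] [CompleteSpace F]
    (E₀ : Subspace ℝ E) (hE₀ : IsClosed (E₀ : Set E))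
    (T : E₀ →L[ℝ] Dual ℝ (Dual ℝ F)) (C : ℝ)
    (hloc : ∀ G : Subspace ℝ E, FiniteDimensional ℝ G →
      ∃ RG : G →L[ℝ] Dual ℝ (Dual ℝ F), ‖RG‖ ≤ C ∧
        ∀ (x : E) (hxG : x ∈ G) (hx0 : x ∈ E₀), RG ⟨x, hxG⟩ = T ⟨x, hx0⟩) :
    ∃ R : E →L[ℝ] Dual ℝ (Dual ℝ F), ‖R‖ ≤ C ∧ ∀ x : E₀, R x = T x :=
  stmt13_general E₀ T C hloc
end
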